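/- arXiv:1704.01777 — 2 statements merged into one kernel-verified Lean document; each statement's English description precedes it below -/
import Mathlib

section
/- For every r ∈ {2, …, n−1}, the finite set (P_r)₀ = {s ∈ P_r : s − a_n ∉ P_r and s − a_{n+1} ∉ P_r} has exactly m_n elements if and only if r ≤ m_1 or r = n − 1. (By the paper's cardinality criterion for Cohen–Macaulayness, with D = m_n here, this says that the semigroup ring K[P_r] is Cohen–Macaulay if and only if r ≤ m_1 or r = n − 1.) -/
/-!
An element of `P_r` is `(x, k * m_n - x)` with `x` in the numerical semigroup `Γ` generated by
`G = {m_i : i ≤ n, i ≠ r}` and `k ≥ ℓ(x)`, the least number of elements of `G` summing to `x`.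
Hence `(P_r)₀` is in bijection with the `x ∈ Γ` such that `ℓ(x) ≤ ℓ(y)` whenever `x = y + m_n`
with `y ∈ Γ`. This set contains the Apéry set of `m_n` in `Γ`, which has `m_n` elements, and
equals it iff `ℓ(y + m_n) > ℓ(y)` for all `y ∈ Γ`; it is finite because `m_n` copies of a
generator `g` can be traded for `g` copies of `m_n`.

A sum of `k` generators is `k * m_1 + s * d`, where `s` is a sum of `k` digits from
`{0, …, n-1} \ {r-1}`, and the possible values of `s` are explicit. When `m_1 < r < n - 1`,
`y = m_r` violates `ℓ(y + m_n) > ℓ(y)`. Otherwise, if `y + m_n = k * m_1 + s * d` with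
`k = ℓ(y + m_n)`, then `y = (k - 1) * m_1 + (s - (n - 1)) * d`, and `s - (n - 1)` is a sum of
`k - 1` digits except in three configurations, each excluded by `r ≤ m_1` or `r = n - 1` together
with the coprimality of `m_1` and `d`.
-/

def IsSumOf (G : Set ℕ) (k x : ℕ) : Prop :=
  ∃ l : Multiset ℕ, (∀ g ∈ l, g ∈ G) ∧ Multiset.card l = k ∧ l.sum = x

section IsSumOf

variable {G : Set ℕ} {j k x y : ℕ}

@[simp]
lemma isSumOf_zero_iff : IsSumOf G 0 x ↔ x = 0 := by
  simp [IsSumOf, eq_comm]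

lemma isSumOf_succ_iff : IsSumOf G (k + 1) x ↔ ∃ g ∈ G, ∃ y, IsSumOf G k y ∧ x = g + y := by
  constructor
  · rintro ⟨l, hlG, hcard, rfl⟩
    obtain ⟨g, hg⟩ := Multiset.card_pos_iff_exists_mem.mp (by omega : 0 < Multiset.card l)
    obtain ⟨l', rfl⟩ := Multiset.exists_cons_of_mem hg
    refine ⟨g, hlG g (Multiset.mem_cons_self g l'), l'.sum,
      ⟨l', fun h hh => hlG h (Multiset.mem_cons_of_mem hh), by simpa using hcard, rfl⟩, ?_⟩
    simp
  · rintro ⟨g, hg, y, ⟨l, hlG, rfl, rfl⟩, rfl⟩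
    refine ⟨g ::ₘ l, ?_, by simp, by simp⟩
    simpa [Multiset.mem_cons, forall_eq_or_imp] using ⟨hg, hlG⟩

lemma IsSumOf.add (h₁ : IsSumOf G j x) (h₂ : IsSumOf G k y) : IsSumOf G (j + k) (x + y) := by
  obtain ⟨l₁, hl₁, rfl, rfl⟩ := h₁
  obtain ⟨l₂, hl₂, rfl, rfl⟩ := h₂
  refine ⟨l₁ + l₂, fun g hg => ?_, by simp, by simp⟩
  exact (Multiset.mem_add.mp hg).elim (hl₁ g) (hl₂ g)

lemma IsSumOf.le_mul {D : ℕ} (hGD : ∀ g ∈ G, g ≤ D) (h : IsSumOf G k x) : x ≤ k * D := by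
  obtain ⟨l, hl, rfl, rfl⟩ := h
  simpa using Multiset.sum_le_card_nsmul l D fun g hg => hGD g (hl g hg)

lemma mem_closure_iff_exists_isSumOf : x ∈ AddSubmonoid.closure G ↔ ∃ k, IsSumOf G k x := by
  constructor
  · intro hx
    obtain ⟨l, hl, rfl⟩ := AddSubmonoid.exists_multiset_of_mem_closure hx
    exact ⟨_, l, hl, rfl, rfl⟩
  · rintro ⟨k, l, hl, -, rfl⟩
    exact AddSubmonoid.multiset_sum_mem _ l fun g hg => AddSubmonoid.subset_closure (hl g hg)

lemma IsSumOf.mem_closure (h : IsSumOf G k x) : x ∈ AddSubmonoid.closure G :=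
  mem_closure_iff_exists_isSumOf.mpr ⟨k, h⟩

lemma isSumOf_image_affine_iff {I : Set ℕ} {c d : ℕ} :
    IsSumOf ((fun i => c + i * d) '' I) k x ↔ ∃ s, IsSumOf I k s ∧ x = k * c + s * d := by
  induction k generalizing x with
  | zero => simp
  | succ k ih =>
    simp only [isSumOf_succ_iff, ih, Set.mem_image]
    constructor
    · rintro ⟨-, ⟨i, hi, rfl⟩, y, ⟨s, hs, rfl⟩, rfl⟩
      exact ⟨i + s, ⟨i, hi, s, hs, rfl⟩, by ring⟩
    · rintro ⟨-, ⟨i, hi, s, hs, rfl⟩, rfl⟩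
      exact ⟨c + i * d, ⟨i, hi, rfl⟩, k * c + s * d, ⟨s, hs, rfl⟩, by ring⟩

end IsSumOf

noncomputable def minLength (G : Set ℕ) (x : ℕ) : ℕ := sInf {k | IsSumOf G k x}

section minLength

variable {G : Set ℕ} {k x : ℕ}

lemma isSumOf_minLength (hx : x ∈ AddSubmonoid.closure G) : IsSumOf G (minLength G x) x :=
  Nat.sInf_mem (mem_closure_iff_exists_isSumOf.mp hx)

lemma minLength_le (h : IsSumOf G k x) : minLength G x ≤ k :=
  Nat.sInf_le h

end minLength

theorem isSumOf_range_erase_iff {n q j s : ℕ} (hn : 4 ≤ n) (hq : 1 ≤ q) (hqn : q + 2 ≤ n) :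
    IsSumOf ((Finset.range n).erase q : Set ℕ) j s ↔ s ≤ j * (n - 1) ∧ ¬(q = 1 ∧ s = 1) ∧
      ¬(q + 2 = n ∧ s + 1 = j * (n - 1)) ∧ ¬(j = 1 ∧ s = q) := by
  obtain ⟨N, rfl⟩ : ∃ N, n = N + 1 := ⟨n - 1, by omega⟩
  rw [Nat.add_sub_cancel]
  induction j generalizing s with
  | zero => simp only [isSumOf_zero_iff]; omega
  | succ j ih =>
    have hexp : (j + 1) * N = j * N + N := Nat.succ_mul j N
    have hj : j = 0 ∧ j * N = 0 ∨ 1 ≤ j ∧ N ≤ j * N := by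
      rcases Nat.eq_zero_or_pos j with h | h
      · exact .inl ⟨h, by simp [h]⟩
      · exact .inr ⟨h, Nat.le_mul_of_pos_left _ h⟩
    simp only [isSumOf_succ_iff, ih, Finset.mem_coe, Finset.mem_erase, Finset.mem_range]
    constructor
    · rintro ⟨g, ⟨hgn, hgq⟩, t, ht, rfl⟩
      omega
    · -- peel off the digit `N`, or a smaller one next to the exceptional sums
      intro hs
      by_cases hsmall : s ≤ N
      · by_cases hsq : s = q
        · exact ⟨q - 1, by omega, 1, by omega, by omega⟩
        · exact ⟨s, by omega, 0, by omega, by omega⟩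
      · by_cases h1 : q = 1 ∧ s = N + 1
        · exact ⟨N - 1, by omega, 2, by omega, by omega⟩
        by_cases h2 : j = 1 ∧ s = N + q
        · obtain ⟨rfl, rfl⟩ := h2
          rw [one_mul] at hexp
          exact ⟨N - 1, by omega, q + 1, by omega, by omega⟩
        · exact ⟨N, by omega, s - N, by omega, by omega⟩

def apery (S : AddSubmonoid ℕ) (D : ℕ) : Set ℕ := {x | x ∈ S ∧ ∀ y ∈ S, y + D ≠ x}

theorem ncard_apery {S : AddSubmonoid ℕ} {D : ℕ} (hD : D ∈ S) (hD0 : 0 < D)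
    (hcof : ∃ N, ∀ x, N ≤ x → x ∈ S) : (apery S D).ncard = D := by
  have hmaps : Set.MapsTo (· % D) (apery S D) (Set.Iio D) := fun x _ => Nat.mod_lt x hD0
  have hinj : Set.InjOn (· % D) (apery S D) := by
    suffices ∀ x ∈ apery S D, ∀ y ∈ apery S D, x ≤ y → x % D = y % D → x = y by
      intro x hx y hy h
      rcases le_total x y with hxy | hxy
      exacts [this x hx y hy hxy h, (this y hy x hx hxy h.symm).symm]
    intro x hx y hy hxy h
    obtain ⟨t, ht⟩ := (Nat.modEq_iff_dvd' hxy).mp h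
    rcases t with _ | t
    · omega
    · have htD : x + t * D ∈ S := S.add_mem hx.1 (by simpa using S.nsmul_mem hD t)
      exact absurd (by rw [Nat.mul_succ, mul_comm] at ht; omega) (hy.2 _ htD)
  have hsurj : Set.SurjOn (· % D) (apery S D) (Set.Iio D) := by
    intro c hc
    obtain ⟨N, hN⟩ := hcof
    have hne : ∃ w, w ∈ S ∧ w % D = c :=
      ⟨c + N * D, hN _ (by nlinarith), by simp [Nat.mod_eq_of_lt (Set.mem_Iio.mp hc)]⟩
    classical
    obtain ⟨hwS, hwc⟩ := Nat.find_spec hne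
    refine ⟨Nat.find hne, ⟨hwS, fun y hy hyw => ?_⟩, hwc⟩
    exact Nat.find_min hne (by omega : y < Nat.find hne)
      ⟨hy, by rw [← hwc, ← hyw, Nat.add_mod_right]⟩
  rw [← hinj.ncard_image, (Set.BijOn.mk hmaps hinj hsurj).image_eq, Set.ncard_eq_toFinset_card']
  simp

def lengthApery (G : Set ℕ) (D : ℕ) : Set ℕ :=
  {x | x ∈ AddSubmonoid.closure G ∧
    ∀ y ∈ AddSubmonoid.closure G, y + D = x → minLength G x ≤ minLength G y}

section lengthApery

variable {G : Set ℕ} {D : ℕ}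

lemma apery_subset_lengthApery : apery (AddSubmonoid.closure G) D ⊆ lengthApery G D :=
  fun _ hx => ⟨hx.1, fun y hy hyx => absurd hyx (hx.2 y hy)⟩

/-- Pigeonhole: a shortest sum of at least `D * D` generators from `[1, D]` repeats some `g`
at least `D` times, and trading `D` copies of `g` for `g` copies of `D` shortens it. -/
lemma minLength_lt_of_mem_lengthApery (hG : ∀ g ∈ G, 0 < g ∧ g ≤ D) (hDG : D ∈ G) {x : ℕ}
    (hx : x ∈ lengthApery G D) : minLength G x < D * D := by
  have hD0 : 0 < D := (hG D hDG).1
  by_contra! hlong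
  obtain ⟨l, hlG, hcard, hsum⟩ := isSumOf_minLength hx.1
  obtain ⟨g, hg, hcount⟩ : ∃ g ∈ Finset.Icc 1 D, D ≤ l.count g := by
    refine Finset.exists_le_of_sum_le (Finset.nonempty_Icc.mpr hD0) ?_
    rw [Multiset.sum_count_eq_card fun g hg => Finset.mem_Icc.mpr (hG g (hlG g hg))]
    simpa [hcard] using hlong
  rw [Finset.mem_Icc] at hg
  obtain ⟨l', rfl⟩ := Multiset.le_iff_exists_add.mp (Multiset.le_count_iff_replicate_le.mp hcount)
  have hrest : IsSumOf G (Multiset.card l' + (g - 1)) (l'.sum + (g - 1) * D) :=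
    IsSumOf.add ⟨l', fun h hh => hlG h (Multiset.mem_add.mpr (.inr hh)), rfl, rfl⟩
      ⟨Multiset.replicate (g - 1) D, fun h hh => (Multiset.eq_of_mem_replicate hh) ▸ hDG,
        by simp, by simp⟩
  have hle := hx.2 _ (mem_closure_iff_exists_isSumOf.mpr ⟨_, hrest⟩) (by
    rw [← hsum, Multiset.sum_add, Multiset.sum_replicate, smul_eq_mul]
    obtain ⟨g', rfl⟩ : ∃ g', g = g' + 1 := ⟨g - 1, by omega⟩
    simp only [Nat.add_sub_cancel]; ring)
  have := minLength_le hrest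
  simp only [Multiset.card_add, Multiset.card_replicate] at hcard
  omega

lemma lengthApery_finite (hG : ∀ g ∈ G, 0 < g ∧ g ≤ D) (hDG : D ∈ G) :
    (lengthApery G D).Finite := by
  refine (Set.finite_Iic (D * D * D)).subset fun x hx => ?_
  have hx_le := (isSumOf_minLength hx.1).le_mul fun g hg => (hG g hg).2
  exact hx_le.trans (Nat.mul_le_mul_right D (minLength_lt_of_mem_lengthApery hG hDG hx).le)

theorem ncard_lengthApery_eq_iff (hG : ∀ g ∈ G, 0 < g ∧ g ≤ D) (hDG : D ∈ G)
    (hcof : ∃ N, ∀ x, N ≤ x → x ∈ AddSubmonoid.closure G) :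
    (lengthApery G D).ncard = D ↔
      ∀ y ∈ AddSubmonoid.closure G, minLength G y < minLength G (y + D) := by
  have hD : D ∈ AddSubmonoid.closure G := AddSubmonoid.subset_closure hDG
  have hcard := ncard_apery hD (hG D hDG).1 hcof
  constructor
  · intro h y hy
    by_contra! hbad
    have hnew : y + D ∈ lengthApery G D :=
      ⟨AddSubmonoid.add_mem _ hy hD, fun y' _ hy' => (add_right_cancel hy') ▸ hbad⟩
    have hsub : insert (y + D) (apery (AddSubmonoid.closure G) D) ⊆ lengthApery G D :=
      Set.insert_subset hnew apery_subset_lengthApery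
    have := Set.ncard_le_ncard hsub (lengthApery_finite hG hDG)
    rw [Set.ncard_insert_of_notMem (fun h => h.2 y hy rfl)
      ((lengthApery_finite hG hDG).subset apery_subset_lengthApery)] at this
    omega
  · intro h
    suffices lengthApery G D = apery (AddSubmonoid.closure G) D by rw [this, hcard]
    refine subset_antisymm (fun x hx => ⟨hx.1, fun y hy hyx => ?_⟩) apery_subset_lengthApery
    exact absurd (hx.2 y hy hyx) (not_le.mpr (hyx ▸ h y hy))

end lengthApery

def liftGens (G : Set ℕ) (D : ℕ) : Set (ℕ × ℕ) := insert (0, D) ((fun g => (g, D - g)) '' G)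

def extremalApery (P : Set (ℕ × ℕ)) (D : ℕ) : Set (ℕ × ℕ) :=
  {v | v ∈ P ∧ (¬∃ t ∈ P, t + (D, 0) = v) ∧ ¬∃ t ∈ P, t + (0, D) = v}

section liftGens

variable {G : Set ℕ} {D j x : ℕ}

lemma IsSumOf.mk_mem_closure_liftGens (hGD : ∀ g ∈ G, g ≤ D) (h : IsSumOf G j x) :
    (x, j * D - x) ∈ AddSubmonoid.closure (liftGens G D) := by
  induction j generalizing x with
  | zero =>
    obtain rfl := isSumOf_zero_iff.mp h
    rw [zero_mul, Nat.sub_zero]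
    exact zero_mem _
  | succ j ih =>
    obtain ⟨g, hg, y, hy, rfl⟩ := isSumOf_succ_iff.mp h
    have hgen : (g, D - g) ∈ AddSubmonoid.closure (liftGens G D) :=
      AddSubmonoid.subset_closure (.inr ⟨g, hg, rfl⟩)
    convert AddSubmonoid.add_mem _ hgen (ih hy) using 1
    have := hy.le_mul hGD
    have := hGD g hg
    refine Prod.ext rfl ?_
    simp only [Prod.snd_add, Nat.succ_mul]
    omega

theorem mem_closure_liftGens_iff (hGD : ∀ g ∈ G, g ≤ D) {v : ℕ × ℕ} :
    v ∈ AddSubmonoid.closure (liftGens G D) ↔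
      v.1 ∈ AddSubmonoid.closure G ∧ ∃ k, minLength G v.1 ≤ k ∧ v.1 + v.2 = k * D := by
  constructor
  · intro hv
    suffices ∃ j k, j ≤ k ∧ IsSumOf G j v.1 ∧ v.1 + v.2 = k * D by
      obtain ⟨j, k, hjk, hj, hk⟩ := this
      exact ⟨hj.mem_closure, k, (minLength_le hj).trans hjk, hk⟩
    induction hv using AddSubmonoid.closure_induction with
    | mem v hv =>
      rcases hv with rfl | ⟨g, hg, rfl⟩
      · exact ⟨0, 1, zero_le_one, isSumOf_zero_iff.mpr rfl, by simp⟩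
      · exact ⟨1, 1, le_rfl, isSumOf_succ_iff.mpr ⟨g, hg, 0, by simp⟩, by simp [hGD g hg]⟩
    | zero => exact ⟨0, 0, le_rfl, isSumOf_zero_iff.mpr rfl, by simp⟩
    | add v w _ _ hv hw =>
      obtain ⟨j, k, hjk, hj, hk⟩ := hv
      obtain ⟨j', k', hjk', hj', hk'⟩ := hw
      refine ⟨j + j', k + k', by omega, hj.add hj', ?_⟩
      simp only [Prod.fst_add, Prod.snd_add, add_mul]
      omega
  · rintro ⟨hv, k, hk, hsum⟩
    have hlen := isSumOf_minLength hv
    have hshort := hlen.mk_mem_closure_liftGens hGD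
    have hray : ((0 : ℕ), (k - minLength G v.1) * D) ∈ AddSubmonoid.closure (liftGens G D) := by
      have h0 : ((0 : ℕ), D) ∈ AddSubmonoid.closure (liftGens G D) :=
        AddSubmonoid.subset_closure (Set.mem_insert _ _)
      simpa using AddSubmonoid.nsmul_mem _ h0 (k - minLength G v.1)
    convert AddSubmonoid.add_mem _ hshort hray using 1
    have := hlen.le_mul hGD
    have : (k - minLength G v.1) * D + minLength G v.1 * D = k * D := by
      rw [← add_mul, Nat.sub_add_cancel hk]
    refine Prod.ext (add_zero _).symm ?_
    simp only [Prod.snd_add]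
    omega

theorem extremalApery_closure_liftGens (hGD : ∀ g ∈ G, g ≤ D) (hD0 : 0 < D) :
    extremalApery (AddSubmonoid.closure (liftGens G D)) D =
      (fun x => (x, minLength G x * D - x)) '' lengthApery G D := by
  have hmem : ∀ x z, (x, z) ∈ AddSubmonoid.closure (liftGens G D) ↔
      x ∈ AddSubmonoid.closure G ∧ ∃ k, minLength G x ≤ k ∧ x + z = k * D :=
    fun x z => mem_closure_liftGens_iff hGD
  ext ⟨x, z⟩
  simp only [extremalApery, Set.mem_ofPred_eq, Set.mem_image, Prod.mk.injEq]
  constructor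
  · rintro ⟨hv, hnot₁, hnot₂⟩
    obtain ⟨hx, k, hk, hsum⟩ := (hmem _ _).mp hv
    have hkeq : k = minLength G x := by
      by_contra hne
      obtain ⟨k, rfl⟩ : ∃ k', k = k' + 1 := ⟨k - 1, by omega⟩
      have := (isSumOf_minLength hx).le_mul hGD
      have := Nat.mul_le_mul_right D (by omega : minLength G x ≤ k)
      rw [Nat.succ_mul] at hsum
      exact hnot₂ ⟨(x, z - D), (hmem _ _).mpr ⟨hx, k, by omega, by omega⟩,
        Prod.ext rfl (by simp only [Prod.snd_add]; omega)⟩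
    subst hkeq
    refine ⟨x, ⟨hx, fun y hy hyx => ?_⟩, rfl, by omega⟩
    by_contra! hlt
    obtain ⟨k, hk⟩ : ∃ k', minLength G x = k' + 1 := ⟨minLength G x - 1, by omega⟩
    rw [hk, Nat.succ_mul] at hsum
    exact hnot₁ ⟨(y, z), (hmem _ _).mpr ⟨hy, k, by omega, by omega⟩,
      Prod.ext (by simpa using hyx) (by simp)⟩
  · rintro ⟨x, ⟨hx, hmin⟩, rfl, rfl⟩
    have hxle := (isSumOf_minLength hx).le_mul hGD
    refine ⟨(hmem _ _).mpr ⟨hx, _, le_rfl, by omega⟩, ?_, ?_⟩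
    · rintro ⟨⟨y, z'⟩, ht, heq⟩
      obtain ⟨hy, k, hk, hsum⟩ := (hmem _ _).mp ht
      simp only [Prod.mk_add_mk, add_zero, Prod.mk.injEq] at heq hsum
      have hk' : (k + 1) * D = minLength G x * D := by rw [Nat.succ_mul]; omega
      have := hmin y hy heq.1
      have := Nat.eq_of_mul_eq_mul_right hD0 hk'
      omega
    · rintro ⟨⟨y, z'⟩, ht, heq⟩
      obtain ⟨hy, k, hk, hsum⟩ := (hmem _ _).mp ht
      simp only [Prod.mk_add_mk, add_zero, Prod.mk.injEq] at heq hsum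
      obtain ⟨rfl, heq⟩ := heq
      have hk' : (k + 1) * D = minLength G y * D := by rw [Nat.succ_mul]; omega
      have := Nat.eq_of_mul_eq_mul_right hD0 hk'
      omega

end liftGens

lemma Nat.Coprime.le_of_mul_add_mul_eq {m d a b t : ℕ} (hcop : Nat.Coprime m d) (ha : 0 < a)
    (h : a * m + b * d = t * d) : m ≤ t := by
  rcases Nat.eq_zero_or_pos m with hm | hm
  · omega
  have hbt : b < t := Nat.lt_of_mul_lt_mul_right (by nlinarith : b * d < t * d)
  have hdvd : m ∣ (t - b) * d := ⟨a, by rw [Nat.sub_mul, mul_comm m a]; omega⟩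
  exact (Nat.le_of_dvd (by omega) (hcop.dvd_of_dvd_mul_right hdvd)).trans (Nat.sub_le t b)

def apGens (m₁ d n q : ℕ) : Set ℕ := (fun i => m₁ + i * d) '' ((Finset.range n).erase q : Set ℕ)

section apGens

variable {m₁ d n q : ℕ}

lemma mem_apGens {i : ℕ} (hin : i < n) (hiq : i ≠ q) : m₁ + i * d ∈ apGens m₁ d n q :=
  ⟨i, Finset.mem_coe.mpr (Finset.mem_erase.mpr ⟨hiq, Finset.mem_range.mpr hin⟩), rfl⟩

lemma top_mem_apGens (hqn : q + 2 ≤ n) : m₁ + (n - 1) * d ∈ apGens m₁ d n q :=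
  mem_apGens (by omega) (by omega)

lemma isSumOf_apGens_iff {k x : ℕ} : IsSumOf (apGens m₁ d n q) k x ↔
    ∃ s, IsSumOf ((Finset.range n).erase q : Set ℕ) k s ∧ x = k * m₁ + s * d :=
  isSumOf_image_affine_iff

lemma apGens_pos_le (hm₁ : 0 < m₁) : ∀ g ∈ apGens m₁ d n q, 0 < g ∧ g ≤ m₁ + (n - 1) * d := by
  rintro - ⟨i, hi, rfl⟩
  rw [Finset.mem_coe, Finset.mem_erase, Finset.mem_range] at hi
  refine ⟨by dsimp only; omega, ?_⟩
  exact Nat.add_le_add_left (Nat.mul_le_mul_right d (by omega)) m₁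

lemma exists_forall_ge_mem_closure_apGens (hn : 4 ≤ n) (hq : 1 ≤ q)
    (hcop : Nat.Coprime m₁ d) : ∃ N, ∀ x, N ≤ x → x ∈ AddSubmonoid.closure (apGens m₁ d n q) := by
  obtain ⟨N, hN⟩ := Nat.exists_mem_closure_of_ge (apGens m₁ d n q)
  refine ⟨N, fun x hx => hN x hx ?_⟩
  suffices Nat.setGcd (apGens m₁ d n q) = 1 by rw [this]; exact one_dvd x
  have hmem : ∀ i, i < n → i ≠ q → Nat.setGcd (apGens m₁ d n q) ∣ m₁ + i * d :=
    fun i hin hiq => Nat.setGcd_dvd_of_mem (mem_apGens hin hiq)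
  obtain ⟨i, h₀, h₁⟩ : ∃ i, Nat.setGcd (apGens m₁ d n q) ∣ m₁ + i * d ∧
      Nat.setGcd (apGens m₁ d n q) ∣ m₁ + (i + 1) * d := by
    by_cases h : q = 1
    · exact ⟨2, hmem 2 (by omega) (by omega), hmem 3 (by omega) (by omega)⟩
    · exact ⟨0, hmem 0 (by omega) (by omega), hmem 1 (by omega) (by omega)⟩
  have hd : Nat.setGcd (apGens m₁ d n q) ∣ d := by
    have := Nat.dvd_sub h₁ h₀
    rwa [add_mul, one_mul, ← add_assoc, Nat.add_sub_cancel_left] at this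
  have hm₁ : Nat.setGcd (apGens m₁ d n q) ∣ m₁ :=
    (Nat.dvd_add_left (Dvd.dvd.mul_left hd i)).mp h₀
  exact Nat.eq_one_of_dvd_coprimes hcop hm₁ hd

theorem minLength_lt_minLength_add (hn : 4 ≤ n) (hq : 1 ≤ q) (hqn : q + 2 ≤ n) (hd : 0 < d)
    (hcop : Nat.Coprime m₁ d) (hcase : q < m₁ ∨ q + 2 = n) {y : ℕ}
    (hy : y ∈ AddSubmonoid.closure (apGens m₁ d n q)) :
    minLength (apGens m₁ d n q) y < minLength (apGens m₁ d n q) (y + (m₁ + (n - 1) * d)) := by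
  have hdig := fun j s => isSumOf_range_erase_iff (j := j) (s := s) hn hq hqn
  have hx := AddSubmonoid.add_mem _ hy (AddSubmonoid.subset_closure (top_mem_apGens (d := d) hqn))
  obtain ⟨N, rfl⟩ : ∃ N, n = N + 1 := ⟨n - 1, by omega⟩
  simp only [Nat.add_sub_cancel] at hdig hx ⊢
  by_contra! hle
  obtain ⟨s, hs, hxs⟩ := isSumOf_apGens_iff.mp (isSumOf_minLength hx)
  obtain ⟨σ, -, hyσ⟩ := isSumOf_apGens_iff.mp (isSumOf_minLength hy)
  set k := minLength (apGens m₁ d (N + 1) q) (y + (m₁ + N * d))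
  set j := minLength (apGens m₁ d (N + 1) q) y
  have hsk := (hdig k s).mp hs
  have hkj : k * m₁ ≤ j * m₁ := Nat.mul_le_mul_right m₁ hle
  have hNs : N ≤ s := by
    by_contra! h
    have := Nat.mul_lt_mul_of_pos_right h hd
    omega
  have hk0 : k ≠ 0 := fun h => by rw [h, zero_mul] at hsk; omega
  obtain ⟨k', hk'⟩ : ∃ k', k = k' + 1 := ⟨k - 1, by omega⟩
  rw [hk'] at hsk hxs hkj hle
  have hexp : (k' + 1) * N = k' * N + N := Nat.succ_mul k' N
  have hyu : y = k' * m₁ + (s - N) * d := by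
    have : s * d = (s - N) * d + N * d := by rw [← add_mul, Nat.sub_add_cancel hNs]
    rw [Nat.succ_mul] at hxs
    omega
  have hu : ¬IsSumOf ((Finset.range (N + 1)).erase q : Set ℕ) k' (s - N) := fun h =>
    absurd (minLength_le (isSumOf_apGens_iff.mpr ⟨_, h, hyu⟩)) (by omega)
  rw [hdig] at hu
  have hjk : k' * m₁ ≤ j * m₁ := Nat.mul_le_mul_right m₁ (by omega)
  rcases (by omega : (q = 1 ∧ s - N = 1) ∨ (q + 2 = N + 1 ∧ s - N + 1 = k' * N) ∨
      (k' = 1 ∧ s - N = q)) with ⟨rfl, hs₁⟩ | ⟨hqN, hs₁⟩ | ⟨rfl, hs₁⟩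
  · -- `(j - k') * m₁ + σ * d = d` forces `m₁ ≤ 1 = q`, while `q + 2 = n` fails as `n ≥ 4`
    rw [hs₁] at hyu
    have := hcop.le_of_mul_add_mul_eq (a := j - k') (b := σ) (t := 1) (by omega)
      (by rw [Nat.sub_mul]; omega)
    omega
  · -- then `s + 1 = (k' + 1) * N`, which the digit sum `s` itself avoids
    omega
  · -- `q + 2 = n` would give `s + 1 = 2 * N`; otherwise `(j - 1) * m₁ + σ * d = q * d`
    have hq' : q < m₁ := by omega
    rw [hs₁] at hyu
    have := hcop.le_of_mul_add_mul_eq (a := j - 1) (b := σ) (t := q) (by omega)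
      (by rw [Nat.sub_mul]; omega)
    omega

theorem exists_minLength_add_le (hn : 4 ≤ n) (hq : 1 ≤ q) (hqn : q + 2 ≤ n) (hm₁ : 0 < m₁)
    (hd : 0 < d) (hm₁q : m₁ ≤ q) (hqn' : q + 2 ≠ n) :
    ∃ y ∈ AddSubmonoid.closure (apGens m₁ d n q),
      minLength (apGens m₁ d n q) (y + (m₁ + (n - 1) * d)) ≤ minLength (apGens m₁ d n q) y := by
  have hdig := fun j s => isSumOf_range_erase_iff (j := j) (s := s) hn hq hqn
  have hy : IsSumOf (apGens m₁ d n q) (1 + d) (m₁ + q * d) := by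
    refine isSumOf_apGens_iff.mpr ⟨q - m₁, (hdig _ _).mpr ?_, ?_⟩
    · have : (1 + d) * (n - 1) = (n - 1) + d * (n - 1) := by ring
      omega
    · obtain ⟨e, rfl⟩ : ∃ e, q = m₁ + e := ⟨q - m₁, by omega⟩
      rw [Nat.add_sub_cancel_left]
      ring
  have hx : IsSumOf (apGens m₁ d n q) 2 (m₁ + q * d + (m₁ + (n - 1) * d)) :=
    isSumOf_apGens_iff.mpr ⟨q + (n - 1), (hdig _ _).mpr (by omega), by ring⟩
  refine ⟨_, hy.mem_closure, (minLength_le hx).trans ?_⟩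
  obtain ⟨s, hs, hys⟩ := isSumOf_apGens_iff.mp (isSumOf_minLength hy.mem_closure)
  by_contra! h
  interval_cases hl : minLength (apGens m₁ d n q) (m₁ + q * d)
  · obtain rfl := isSumOf_zero_iff.mp hs
    simp only [zero_mul, add_zero] at hys
    omega
  · have hsq : s = q := Nat.eq_of_mul_eq_mul_right hd (by omega)
    exact ((hdig 1 s).mp hs).2.2.2 ⟨rfl, hsq⟩

theorem forall_minLength_lt_minLength_add_iff (hn : 4 ≤ n) (hq : 1 ≤ q) (hqn : q + 2 ≤ n)
    (hm₁ : 0 < m₁) (hd : 0 < d) (hcop : Nat.Coprime m₁ d) :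
    (∀ y ∈ AddSubmonoid.closure (apGens m₁ d n q),
      minLength (apGens m₁ d n q) y < minLength (apGens m₁ d n q) (y + (m₁ + (n - 1) * d))) ↔
      q < m₁ ∨ q + 2 = n := by
  refine ⟨fun h => ?_, fun hcase y hy => minLength_lt_minLength_add hn hq hqn hd hcop hcase hy⟩
  by_contra! hc
  obtain ⟨y, hy, hle⟩ := exists_minLength_add_le hn hq hqn hm₁ hd hc.1 hc.2
  exact absurd (h y hy) (not_lt.mpr hle)

end apGens

lemma exists_intCast_sub_eq_iff {P : AddSubmonoid (ℕ × ℕ)} {s c : ℕ × ℕ} :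
    (∃ t ∈ P, ((t.1 : ℤ), (t.2 : ℤ)) = ((s.1 : ℤ) - (c.1 : ℤ), (s.2 : ℤ) - (c.2 : ℤ))) ↔
      ∃ t ∈ P, t + c = s := by
  simp only [Prod.ext_iff, Prod.fst_add, Prod.snd_add]
  constructor <;> rintro ⟨t, ht, h₁, h₂⟩ <;> exact ⟨t, ht, by omega, by omega⟩

lemma image_Icc_sdiff_eq_liftGens_apGens {n m₁ d r : ℕ} {m : ℕ → ℕ}
    (hm : ∀ i, m i = m₁ + (i - 1) * d) {a : ℕ → ℕ × ℕ}
    (ha : ∀ i, a i = if i = n + 1 then (0, m n) else (m i, m n - m i)) (hr₁ : 1 ≤ r)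
    (hr₂ : r ≤ n) :
    a '' (Set.Icc 1 (n + 1) \ {r}) = liftGens (apGens m₁ d n (r - 1)) (m n) := by
  ext v
  simp only [liftGens, apGens, Set.mem_insert_iff, Set.mem_image, Set.mem_sdiff, Set.mem_Icc,
    Set.mem_singleton_iff, Finset.mem_coe, Finset.mem_erase, Finset.mem_range]
  constructor
  · rintro ⟨i, ⟨⟨hi₁, hin⟩, hir⟩, rfl⟩
    rw [ha i]
    by_cases hi : i = n + 1
    · exact .inl (if_pos hi)
    · exact .inr ⟨m i, ⟨i - 1, ⟨by omega, by omega⟩, (hm i).symm⟩, (if_neg hi).symm⟩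
  · rintro (rfl | ⟨-, ⟨i, ⟨hiq, hin⟩, rfl⟩, rfl⟩)
    · exact ⟨n + 1, ⟨⟨by omega, le_rfl⟩, by omega⟩, by rw [ha, if_pos rfl]⟩
    · refine ⟨i + 1, ⟨⟨by omega, by omega⟩, by omega⟩, ?_⟩
      rw [ha, if_neg (by omega), hm (i + 1), Nat.add_sub_cancel]

/-- For `r ∈ {2,…,n-1}`, the finite set
`(P_r)₀ = {s ∈ P_r : s - a_n ∉ P_r and s - a_{n+1} ∉ P_r}` has exactly `m_n` elements
if and only if `r ≤ m_1` or `r = n-1` (the Cohen–Macaulayness criterion for `K[P_r]`). -/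
theorem stmt_14 (n m₁ d : ℕ) (hn : 4 ≤ n) (hm₁ : 0 < m₁) (hd : 0 < d)
    (hgcd : Nat.gcd m₁ d = 1)
    (m : ℕ → ℕ) (hm : ∀ i, m i = m₁ + (i - 1) * d)
    (a : ℕ → ℕ × ℕ)
    (ha : ∀ i, a i = if i = n + 1 then (0, m n) else (m i, m n - m i))
    (r : ℕ) (hr₁ : 2 ≤ r) (hr₂ : r ≤ n - 1)
    (P : AddSubmonoid (ℕ × ℕ))
    (hP : P = AddSubmonoid.closure (a '' (Set.Icc 1 (n + 1) \ {r})))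
    (P0 : Set (ℕ × ℕ))
    (hP0 : P0 = {s | s ∈ P ∧
      (¬ ∃ t ∈ P, ((t.1 : ℤ), (t.2 : ℤ)) =
        ((s.1 : ℤ) - ((a n).1 : ℤ), (s.2 : ℤ) - ((a n).2 : ℤ))) ∧
      (¬ ∃ t ∈ P, ((t.1 : ℤ), (t.2 : ℤ)) =
        ((s.1 : ℤ) - ((a (n + 1)).1 : ℤ), (s.2 : ℤ) - ((a (n + 1)).2 : ℤ)))}) :
    P0.Finite ∧ (P0.ncard = m n ↔ (r ≤ m₁ ∨ r = n - 1)) := by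
  have hq : 1 ≤ r - 1 := by omega
  have hqn : r - 1 + 2 ≤ n := by omega
  have hD : m n = m₁ + (n - 1) * d := hm n
  have hG := apGens_pos_le (d := d) (n := n) (q := r - 1) hm₁
  rw [← hD] at hG
  have hDG : m n ∈ apGens m₁ d n (r - 1) := hD ▸ top_mem_apGens hqn
  have hP0' : P0 = extremalApery P (m n) := by
    have han : a n = (m n, 0) := by rw [ha, if_neg (by omega), Nat.sub_self]
    have han₁ : a (n + 1) = (0, m n) := by rw [ha, if_pos rfl]
    simp only [hP0, exists_intCast_sub_eq_iff]
    rw [han, han₁]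
    rfl
  rw [hP0', hP, image_Icc_sdiff_eq_liftGens_apGens hm ha (by omega) (by omega),
    extremalApery_closure_liftGens (fun g hg => (hG g hg).2) (hG _ hDG).1]
  refine ⟨(lengthApery_finite hG hDG).image _, ?_⟩
  rw [Set.ncard_image_of_injective _ fun x y h => congrArg Prod.fst h,
    ncard_lengthApery_eq_iff hG hDG (exists_forall_ge_mem_closure_apGens hn hq hgcd), hD,
    forall_minLength_lt_minLength_add_iff hn hq hqn hm₁ hd hgcd]
  omega
end

section
/- Define (P_r)₁ = {s ∈ P_r : s − a_n ∈ P_r, s − a_{n+1} ∈ P_r and s − a_n − a_{n+1} ∉ P_r}. Then: if r = 2 and m_1 = 1, (P_2)₁ = {μ·a_1 + a_2 + a_n + d·a_{n+1} : 0 ≤ μ ≤ d − 1}; and if 3 ≤ r ≤ n − 2 and m_1 < r, (P_r)₁ = {a_r + a_n + d·a_{n+1}}. -/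
/-!
Write `M = m_n`. A point `(x, y)` lies in `P_r` iff `x + y = k M` and `x = u m₁ + d E` with
`u ≤ k` and `E` a sum of `u` elements of `{0, …, n - 1} \ {r - 1}`; apart from two small
exceptions, every `E ≤ u (n - 1)` is such a sum.

Let `s = (x, y) ∈ (P_r)₁` have degree `K + 2`. Then `x - M = (K + 1) m₁ + d E₁` (the degree is
exact because `s - a_n - a_{n+1} ∉ P_r`), while `s - a_{n+1} ∈ P_r` gives `x = u₂ m₁ + d E₂` with
`u₂ ≤ K + 1`. As `gcd(m₁, d) = 1`, the two expressions of `x` differ by a multiple `j ≥ 1` of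
`(d, -m₁)`, and `E₂ ≤ u₂ (n - 1)` turns into `E₁ + m₁ ≤ (K + 1 - d)(n - 1)`. So
`x - M = (K + 1 - d) m₁ + d (E₁ + m₁)` would be a representation of degree `K` unless
`E₁ + m₁` is one of the exceptions, and the exceptions determine `s`.
-/

namespace ArithSeq

def sumsOf (D : Set ℕ) (u : ℕ) : Set ℕ :=
  {E | ∃ s : Multiset ℕ, (∀ e ∈ s, e ∈ D) ∧ Multiset.card s = u ∧ s.sum = E}

section SumsOf

variable {D : Set ℕ} {u u' E E' : ℕ}

theorem mem_sumsOf_zero : E ∈ sumsOf D 0 ↔ E = 0 := by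
  constructor
  · rintro ⟨s, -, hs, rfl⟩
    simp [Multiset.card_eq_zero.1 hs]
  · rintro rfl
    exact ⟨0, by simp, rfl, rfl⟩

theorem mem_sumsOf_one : E ∈ sumsOf D 1 ↔ E ∈ D := by
  constructor
  · rintro ⟨s, hsD, hs, rfl⟩
    obtain ⟨e, rfl⟩ := Multiset.card_eq_one.1 hs
    simpa using hsD e
  · intro hE
    exact ⟨{E}, by simpa using hE, rfl, by simp⟩

theorem add_mem_sumsOf (hE : E ∈ sumsOf D u) (hE' : E' ∈ sumsOf D u') :
    E + E' ∈ sumsOf D (u + u') := by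
  obtain ⟨s, hsD, rfl, rfl⟩ := hE
  obtain ⟨s', hsD', rfl, rfl⟩ := hE'
  refine ⟨s + s', fun e he => ?_, by simp, by simp⟩
  rcases Multiset.mem_add.1 he with he | he
  exacts [hsD e he, hsD' e he]

theorem mul_mem_sumsOf {e : ℕ} (he : e ∈ D) (k : ℕ) : k * e ∈ sumsOf D k :=
  ⟨Multiset.replicate k e, fun _ h => Multiset.eq_of_mem_replicate h ▸ he, by simp, by simp⟩

theorem le_mul_of_mem_sumsOf {b : ℕ} (hD : ∀ e ∈ D, e ≤ b) (hE : E ∈ sumsOf D u) :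
    E ≤ u * b := by
  obtain ⟨s, hsD, rfl, rfl⟩ := hE
  simpa using Multiset.sum_le_card_nsmul s b fun e he => hD e (hsD e he)

theorem one_mem_of_one_mem_sumsOf (h : 1 ∈ sumsOf D u) : 1 ∈ D := by
  obtain ⟨s, hsD, -, hs⟩ := h
  obtain ⟨e, he, he0⟩ : ∃ e ∈ s, e ≠ 0 := by
    by_contra! h0
    simp [Multiset.sum_eq_zero h0] at hs
  have : e ≤ 1 := hs ▸ Multiset.le_sum_of_mem he
  obtain rfl : e = 1 := by omega
  exact hsD 1 he

theorem mem_sumsOf_Iio_diff {n r : ℕ} (hr : 2 ≤ r) (hrn : r ≤ n - 2)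
    (hE : E ≤ u * (n - 1)) (hexc : ¬(E = r - 1 ∧ (r = 2 ∨ u = 1))) :
    E ∈ sumsOf (Set.Iio n \ {r - 1}) u := by
  have mem : ∀ {e}, e < n → e ≠ r - 1 → e ∈ Set.Iio n \ {r - 1} := fun h h' => ⟨h, h'⟩
  have single : ∀ {e}, e < n → e ≠ r - 1 → e ∈ sumsOf (Set.Iio n \ {r - 1}) 1 :=
    fun h h' => mem_sumsOf_one.2 (mem h h')
  have zeros := mul_mem_sumsOf (mem (e := 0) (by omega) (by omega))
  have tops := mul_mem_sumsOf (mem (e := n - 1) (by omega) (by omega))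
  -- `E = q (n - 1) + ρ` is `q` copies of `n - 1`, one `ρ` and zeros; a forbidden `ρ = r - 1` is
  -- replaced by `(n - 1) + (r - 1) = (n - 2) + r`, or by `(r - 2) + 1` when `q = 0`.
  obtain ⟨q, ρ, rfl, hρ⟩ : ∃ q ρ, E = q * (n - 1) + ρ ∧ ρ < n - 1 :=
    ⟨E / (n - 1), E % (n - 1), by rw [mul_comm, Nat.div_add_mod], Nat.mod_lt _ (by omega)⟩
  rcases Nat.lt_or_ge q u with hq | hq
  · obtain ⟨k, rfl⟩ := Nat.exists_eq_add_of_lt hq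
    by_cases hρr : ρ = r - 1
    · subst hρr
      rcases Nat.eq_zero_or_pos q with rfl | hq0
      · obtain ⟨j, rfl⟩ : ∃ j, k = j + 1 := ⟨k - 1, by omega⟩
        have := add_mem_sumsOf (add_mem_sumsOf (single (e := r - 2) (by omega) (by omega))
          (single (e := 1) (by omega) (by omega))) (zeros j)
        convert this using 1
        · congr 1; omega
        · omega
      · obtain ⟨j, rfl⟩ : ∃ j, q = j + 1 := ⟨q - 1, by omega⟩
        have := add_mem_sumsOf (add_mem_sumsOf (add_mem_sumsOf (tops j)
          (single (e := n - 2) (by omega) (by omega))) (single (e := r) (by omega) (by omega)))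
          (zeros k)
        convert this using 1
        · congr 1; omega
        · rw [add_one_mul]; omega
    · have := add_mem_sumsOf (add_mem_sumsOf (tops q) (single (by omega) hρr)) (zeros k)
      convert this using 1
      · congr 1; omega
      · omega
  · have hle : q * (n - 1) ≤ u * (n - 1) := by omega
    obtain rfl : q = u := le_antisymm (Nat.le_of_mul_le_mul_right hle (by omega)) hq
    obtain rfl : ρ = 0 := by omega
    simpa using tops q

end SumsOf

theorem exists_eq_add_mul_of_add_mul_eq {m₁ d u u' E E' : ℕ} (hcop : Nat.Coprime m₁ d)
    (hd : 0 < d) (hu : u' ≤ u) (h : u * m₁ + d * E = u' * m₁ + d * E') :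
    ∃ j, u = u' + j * d ∧ E' = E + j * m₁ := by
  obtain ⟨w, rfl⟩ := Nat.exists_eq_add_of_le hu
  have hw : w * m₁ + d * E = d * E' := by rw [add_mul] at h; omega
  obtain ⟨j, rfl⟩ : d ∣ w :=
    hcop.symm.dvd_of_dvd_mul_right ⟨E' - E, by rw [Nat.mul_sub]; omega⟩
  refine ⟨j, by ring, Nat.eq_of_mul_eq_mul_left hd ?_⟩
  rw [← hw]; ring

/-- `(x, k M - x)` is then the sum of `u` points `(m₁ + e d, M - m₁ - e d)`, `e ∈ D`, and of
`k - u` copies of `(0, M)`; `k` is its degree. -/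
def FstOfDeg (m₁ d : ℕ) (D : Set ℕ) (k x : ℕ) : Prop :=
  ∃ u ≤ k, ∃ E ∈ sumsOf D u, x = u * m₁ + d * E

section FstOfDeg

variable {m₁ d : ℕ} {D : Set ℕ} {k k' x x' : ℕ}

theorem FstOfDeg.mono (h : FstOfDeg m₁ d D k x) (hk : k ≤ k') : FstOfDeg m₁ d D k' x :=
  let ⟨u, hu, E, hE, hx⟩ := h
  ⟨u, hu.trans hk, E, hE, hx⟩

theorem FstOfDeg.add (h : FstOfDeg m₁ d D k x) (h' : FstOfDeg m₁ d D k' x') :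
    FstOfDeg m₁ d D (k + k') (x + x') :=
  let ⟨u, hu, E, hE, hx⟩ := h
  let ⟨u', hu', E', hE', hx'⟩ := h'
  ⟨u + u', add_le_add hu hu', E + E', add_mem_sumsOf hE hE', by rw [hx, hx']; ring⟩

end FstOfDeg

/-- `(x, y) ∈ (P_r)₁`, read through `FstOfDeg`: here `M = m_n` and `(x, y)` has degree `K + 2`. -/
def IsGapCorner (m₁ d : ℕ) (D : Set ℕ) (M x y : ℕ) : Prop :=
  ∃ K, x + y = (K + 2) * M ∧ M ≤ x ∧ M ≤ y ∧ FstOfDeg m₁ d D (K + 1) (x - M) ∧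
    FstOfDeg m₁ d D (K + 1) x ∧ ¬FstOfDeg m₁ d D K (x - M)

theorem exists_fst_eq_of_isGapCorner {m₁ d : ℕ} {D : Set ℕ} {b x y : ℕ}
    (hcop : Nat.Coprime m₁ d) (hm₁ : 0 < m₁) (hd : 0 < d) (hD : ∀ e ∈ D, e ≤ b)
    (h : IsGapCorner m₁ d D (m₁ + b * d) x y) :
    ∃ K u F, x + y = (K + 2) * (m₁ + b * d) ∧ ¬FstOfDeg m₁ d D K (x - (m₁ + b * d)) ∧
      u + d = K + 1 ∧ m₁ ≤ F ∧ F ≤ u * b ∧ F ∉ sumsOf D u ∧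
      x = (m₁ + b * d) + u * m₁ + d * F := by
  obtain ⟨K, hK, hx, -, ⟨u₁, hu₁, E₁, hE₁, hx₁⟩, ⟨u₂, hu₂, E₂, hE₂, hx₂⟩, hK'⟩ := h
  obtain rfl : u₁ = K + 1 := by
    by_contra hne
    exact hK' ⟨u₁, by omega, E₁, hE₁, hx₁⟩
  have hx' : (K + 2) * m₁ + d * (E₁ + b) = u₂ * m₁ + d * E₂ := by
    have : x = m₁ + b * d + (K + 1) * m₁ + d * E₁ := by omega
    rw [← hx₂, this]; ring
  obtain ⟨j, hj, hjE⟩ := exists_eq_add_mul_of_add_mul_eq hcop hd (by omega) hx'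
  have hj1 : 1 ≤ j := Nat.pos_of_ne_zero fun h0 => by subst h0; omega
  have hjd : d ≤ j * d := Nat.le_mul_of_pos_left d hj1
  have hjm : m₁ ≤ j * m₁ := Nat.le_mul_of_pos_left m₁ hj1
  have hE₂b := le_mul_of_mem_sumsOf hD hE₂
  obtain ⟨v, rfl⟩ : ∃ v, u₂ = v + 1 :=
    Nat.exists_eq_add_one.2 (Nat.pos_of_ne_zero fun h0 => by subst h0; omega)
  obtain ⟨u, hu⟩ : ∃ u, K + 1 = u + d := ⟨K + 1 - d, by omega⟩
  have hvu : v * b ≤ u * b := Nat.mul_le_mul_right b (by omega)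
  have hxu : x - (m₁ + b * d) = u * m₁ + d * (E₁ + m₁) := by rw [hx₁, hu]; ring
  refine ⟨K, u, E₁ + m₁, hK, hK', hu.symm, by omega, by rw [add_one_mul] at hE₂b; omega,
    fun hF => hK' ⟨u, by omega, E₁ + m₁, hF, hxu⟩, by omega⟩

section Monoid

variable {n m₁ d r : ℕ}

def gen (n m₁ d i : ℕ) : ℕ × ℕ :=
  if i = n + 1 then (0, m₁ + (n - 1) * d)
  else (m₁ + (i - 1) * d, m₁ + (n - 1) * d - (m₁ + (i - 1) * d))

def gapMonoid (n m₁ d r : ℕ) : AddSubmonoid (ℕ × ℕ) :=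
  AddSubmonoid.closure (gen n m₁ d '' (Set.Icc 1 (n + 1) \ {r}))

theorem gen_of_le {i : ℕ} (hi : 1 ≤ i) (hin : i ≤ n) :
    gen n m₁ d i = (m₁ + (i - 1) * d, (n - i) * d) := by
  rw [gen, if_neg (by omega), Nat.add_sub_add_left, ← Nat.sub_mul]
  congr 2
  omega

theorem fst_add_snd_gen {i : ℕ} (hi : i ≤ n + 1) :
    (gen n m₁ d i).1 + (gen n m₁ d i).2 = m₁ + (n - 1) * d := by
  unfold gen
  split_ifs
  · simp
  · have : (i - 1) * d ≤ (n - 1) * d := Nat.mul_le_mul_right d (by omega)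
    simp only
    omega

theorem sum_map_gen {s : Multiset ℕ} (hs : ∀ e ∈ s, e < n) :
    ((s.map fun e => gen n m₁ d (e + 1)).sum).1 = Multiset.card s * m₁ + d * s.sum ∧
      ((s.map fun e => gen n m₁ d (e + 1)).sum).1 + ((s.map fun e => gen n m₁ d (e + 1)).sum).2 =
        Multiset.card s * (m₁ + (n - 1) * d) := by
  induction s using Multiset.induction_on with
  | empty => simp
  | cons e s ih =>
    obtain ⟨ih₁, ih₂⟩ := ih fun e he => hs e (Multiset.mem_cons_of_mem he)
    have he : e < n := hs e (Multiset.mem_cons_self e s)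
    have hfst : (gen n m₁ d (e + 1)).1 = m₁ + e * d := by simp [gen, he.ne]
    have hsum := fst_add_snd_gen (m₁ := m₁) (d := d) (show e + 1 ≤ n + 1 by omega)
    simp only [Multiset.map_cons, Multiset.sum_cons, Prod.fst_add, Prod.snd_add,
      Multiset.card_cons]
    constructor
    · rw [ih₁, hfst]; ring
    · rw [add_one_mul, ← ih₂]; omega

theorem mem_gapMonoid_iff (hr : 1 ≤ r) (hrn : r ≤ n) {x y : ℕ} :
    (x, y) ∈ gapMonoid n m₁ d r ↔
      ∃ k, x + y = k * (m₁ + (n - 1) * d) ∧ FstOfDeg m₁ d (Set.Iio n \ {r - 1}) k x := by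
  have hgen : ∀ i ∈ Set.Icc 1 (n + 1) \ {r}, gen n m₁ d i ∈ gapMonoid n m₁ d r :=
    fun i hi => AddSubmonoid.subset_closure ⟨i, hi, rfl⟩
  constructor
  · suffices ∀ p ∈ gapMonoid n m₁ d r, ∃ k, p.1 + p.2 = k * (m₁ + (n - 1) * d) ∧
        FstOfDeg m₁ d (Set.Iio n \ {r - 1}) k p.1 from this _
    intro p h
    induction h using AddSubmonoid.closure_induction with
    | mem p hp =>
      obtain ⟨i, ⟨⟨hi1, hin⟩, hir⟩, rfl⟩ := hp
      refine ⟨1, by rw [one_mul, fst_add_snd_gen hin], ?_⟩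
      by_cases hi : i = n + 1
      · exact ⟨0, zero_le_one, 0, mem_sumsOf_zero.2 rfl, by simp [gen, hi]⟩
      · refine ⟨1, le_rfl, i - 1, mem_sumsOf_one.2 ⟨Set.mem_Iio.2 (by omega), ?_⟩, ?_⟩
        · exact Set.mem_singleton_iff.not.2 fun h => hir (Set.mem_singleton_iff.2 (by omega))
        · rw [gen_of_le hi1 (by omega)]; ring
    | zero => exact ⟨0, by simp, 0, le_rfl, 0, mem_sumsOf_zero.2 rfl, by simp⟩
    | add p q _ _ hp hq =>
      obtain ⟨k, hk, hkx⟩ := hp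
      obtain ⟨k', hk', hkx'⟩ := hq
      exact ⟨k + k', by simp only [Prod.fst_add, Prod.snd_add]; rw [add_mul]; omega, hkx.add hkx'⟩
  · rintro ⟨k, hxy, u, hu, E, ⟨s, hsD, rfl, rfl⟩, hx⟩
    obtain ⟨h₁, h₂⟩ := sum_map_gen (n := n) (m₁ := m₁) (d := d) fun e he => (hsD e he).1
    have hsum : (s.map fun e => gen n m₁ d (e + 1)).sum ∈ gapMonoid n m₁ d r := by
      refine AddSubmonoid.multiset_sum_mem _ _ ?_
      simp only [Multiset.mem_map]
      rintro _ ⟨e, he, rfl⟩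
      obtain ⟨he, her⟩ := hsD e he
      simp only [Set.mem_Iio, Set.mem_singleton_iff] at he her
      exact hgen _ ⟨⟨by omega, by omega⟩, Set.mem_singleton_iff.not.2 (by omega)⟩
    have hlast : (k - Multiset.card s) • gen n m₁ d (n + 1) ∈ gapMonoid n m₁ d r :=
      nsmul_mem (hgen (n + 1) ⟨⟨by omega, le_rfl⟩, Set.mem_singleton_iff.not.2 (by omega)⟩) _
    convert add_mem hsum hlast using 1
    have hk : (k - Multiset.card s) * (m₁ + (n - 1) * d) + Multiset.card s * (m₁ + (n - 1) * d)
        = k * (m₁ + (n - 1) * d) := by rw [← add_mul, Nat.sub_add_cancel hu]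
    have hgen_last : gen n m₁ d (n + 1) = (0, m₁ + (n - 1) * d) := if_pos rfl
    simp only [hgen_last, Prod.ext_iff, Prod.fst_add, Prod.snd_add, Prod.smul_mk, smul_eq_mul,
      mul_zero, add_zero]
    omega

theorem corner_conditions_iff_isGapCorner (hM : 0 < m₁ + (n - 1) * d) (hr : 1 ≤ r) (hrn : r ≤ n)
    {x y : ℕ} :
    ((x, y) ∈ gapMonoid n m₁ d r ∧
      (m₁ + (n - 1) * d ≤ x ∧ (x - (m₁ + (n - 1) * d), y) ∈ gapMonoid n m₁ d r) ∧
      (m₁ + (n - 1) * d ≤ y ∧ (x, y - (m₁ + (n - 1) * d)) ∈ gapMonoid n m₁ d r) ∧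
      ¬(m₁ + (n - 1) * d ≤ x ∧ m₁ + (n - 1) * d ≤ y ∧
        (x - (m₁ + (n - 1) * d), y - (m₁ + (n - 1) * d)) ∈ gapMonoid n m₁ d r)) ↔
    IsGapCorner m₁ d (Set.Iio n \ {r - 1}) (m₁ + (n - 1) * d) x y := by
  simp only [mem_gapMonoid_iff hr hrn, IsGapCorner]
  generalize m₁ + (n - 1) * d = M at hM ⊢
  constructor
  · rintro ⟨-, ⟨hx, k, hk, hkx⟩, ⟨hy, k', hk', hk'x⟩, hxy⟩
    obtain ⟨K, rfl⟩ : ∃ K, k = K + 1 :=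
      Nat.exists_eq_add_one.2 (Nat.pos_of_mul_pos_right (show 0 < k * M by omega))
    obtain rfl : k' = K + 1 := Nat.eq_of_mul_eq_mul_right hM (by omega)
    have h₁ : (K + 1) * M = K * M + M := add_one_mul K M
    have h₂ : (K + 2) * M = K * M + 2 * M := by ring
    exact ⟨K, by omega, hx, hy, hkx, hk'x, fun hK => hxy ⟨hx, hy, K, by omega, hK⟩⟩
  · rintro ⟨K, hK, hx, hy, hKx, hKx', hK'⟩
    have h₁ : (K + 1) * M = K * M + M := add_one_mul K M
    have h₂ : (K + 2) * M = K * M + 2 * M := by ring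
    refine ⟨⟨K + 2, hK, hKx'.mono (by omega)⟩, ⟨hx, K + 1, by omega, hKx⟩,
      ⟨hy, K + 1, by omega, hKx'⟩, fun ⟨_, _, k, hk, hkx⟩ => hK' ?_⟩
    obtain rfl : k = K := Nat.eq_of_mul_eq_mul_right hM (by omega)
    exact hkx

theorem isGapCorner_Iio_diff_one_iff (hn : 4 ≤ n) (hd : 0 < d) {x y : ℕ} :
    IsGapCorner 1 d (Set.Iio n \ {1}) (1 + (n - 1) * d) x y ↔
      ∃ μ < d, x = (1 + (n - 1) * d) + (μ + d + 1) ∧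
        x + y = (μ + d + 2) * (1 + (n - 1) * d) := by
  have hD : ∀ e ∈ Set.Iio n \ {1}, e ≤ n - 1 := fun e he => Nat.le_sub_one_of_lt he.1
  constructor
  · intro h
    obtain ⟨K, u, F, hK, hK', hu, hF, hFu, hFmem, hx⟩ :=
      exists_fst_eq_of_isGapCorner (Nat.coprime_one_left d) one_pos hd hD h
    have hu1 : 1 ≤ u := Nat.pos_of_ne_zero fun h0 => by subst h0; omega
    obtain rfl : F = 1 := by
      by_contra hF1
      exact hFmem (mem_sumsOf_Iio_diff (r := 2) le_rfl (by omega) hFu (by omega))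
    -- otherwise `x - M = (u - d) + 2 d` has degree `K`
    have hud : u ≤ d := by
      by_contra! hdu
      refine hK' ⟨u - d, by omega, 2, mem_sumsOf_Iio_diff (r := 2) le_rfl (by omega) ?_ (by omega),
        by omega⟩
      have := Nat.mul_le_mul (show 1 ≤ u - d by omega) (show 2 ≤ n - 1 by omega)
      omega
    refine ⟨u - 1, by omega, by omega, ?_⟩
    rw [hK]; congr 1; omega
  · rintro ⟨μ, hμ, hx, hxy⟩
    have hM : 2 * (μ + d) ≤ (μ + d) * (1 + (n - 1) * d) := by
      rw [mul_comm]
      refine Nat.mul_le_mul_left _ ?_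
      have := Nat.mul_le_mul (show 1 ≤ n - 1 by omega) hd
      omega
    have hxy' : (μ + d + 2) * (1 + (n - 1) * d) =
        (μ + d) * (1 + (n - 1) * d) + 2 * (1 + (n - 1) * d) := by ring
    refine ⟨μ + d, hxy, by omega, by omega, ⟨μ + d + 1, le_rfl, 0, ?_, by omega⟩,
      ⟨μ + 2, by omega, n, ?_, ?_⟩, ?_⟩
    · exact mem_sumsOf_Iio_diff (r := 2) le_rfl (by omega) (by omega) (by omega)
    · refine mem_sumsOf_Iio_diff (r := 2) le_rfl (by omega) ?_ (by omega)
      have := Nat.mul_le_mul_right (n - 1) (show 2 ≤ μ + 2 by omega)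
      omega
    · have : d * n = (n - 1) * d + d := by
        rw [← add_one_mul, Nat.sub_add_cancel (by omega), mul_comm]
      omega
    · rintro ⟨u, hu, E, hE, h⟩
      rcases Nat.lt_or_ge E 2 with hE2 | hE2
      · interval_cases E
        · omega
        · exact (one_mem_of_one_mem_sumsOf hE).2 rfl
      · have := Nat.mul_le_mul_left d hE2
        obtain rfl : u = 0 := by omega
        obtain rfl := mem_sumsOf_zero.1 hE
        omega

theorem isGapCorner_Iio_diff_iff (hcop : Nat.Coprime m₁ d) (hm₁ : 0 < m₁) (hd : 0 < d)
    (hr : 3 ≤ r) (hrn : r ≤ n - 2) (hm₁r : m₁ < r) {x y : ℕ} :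
    IsGapCorner m₁ d (Set.Iio n \ {r - 1}) (m₁ + (n - 1) * d) x y ↔
      x = (m₁ + (n - 1) * d) + (m₁ + (r - 1) * d) ∧ x + y = (d + 2) * (m₁ + (n - 1) * d) := by
  have hD : ∀ e ∈ Set.Iio n \ {r - 1}, e ≤ n - 1 := fun e he => Nat.le_sub_one_of_lt he.1
  constructor
  · intro h
    obtain ⟨K, u, F, hK, -, hu, hF, hFu, hFmem, hx⟩ :=
      exists_fst_eq_of_isGapCorner hcop hm₁ hd hD h
    obtain ⟨rfl, rfl⟩ : F = r - 1 ∧ u = 1 := by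
      by_contra hexc
      exact hFmem (mem_sumsOf_Iio_diff (by omega) hrn hFu (by omega))
    have hKd : K = d := by omega
    exact ⟨by rw [hx]; ring, by rw [hK, hKd]⟩
  · rintro ⟨hx, hxy⟩
    have hrM : (r - 1) * d ≤ (n - 1) * d := Nat.mul_le_mul_right d (by omega)
    have hdM : 1 * (m₁ + (n - 1) * d) ≤ d * (m₁ + (n - 1) * d) := Nat.mul_le_mul_right _ hd
    have hxy' : (d + 2) * (m₁ + (n - 1) * d) =
        d * (m₁ + (n - 1) * d) + 2 * (m₁ + (n - 1) * d) := by ring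
    refine ⟨d, hxy, by omega, by omega, ⟨d + 1, le_rfl, r - 1 - m₁, ?_, ?_⟩,
      ⟨2, by omega, n - 1 + (r - 1), ?_, ?_⟩, ?_⟩
    · refine mem_sumsOf_Iio_diff (by omega) hrn ?_ (by omega)
      have := Nat.mul_le_mul (show 1 ≤ d + 1 by omega) (show r - 1 - m₁ ≤ n - 1 by omega)
      omega
    · have : d * (r - 1 - m₁) + d * m₁ = (r - 1) * d := by
        rw [← mul_add, Nat.sub_add_cancel (by omega), mul_comm]
      rw [add_one_mul]; omega
    · exact mem_sumsOf_Iio_diff (by omega) hrn (by omega) (by omega)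
    · rw [hx]; ring
    · rintro ⟨u, hu, E, hE, h⟩
      rcases Nat.eq_zero_or_pos u with rfl | hu0
      · obtain rfl := mem_sumsOf_zero.1 hE
        omega
      obtain ⟨j, hj, hjE⟩ := exists_eq_add_mul_of_add_mul_eq (u := u) (u' := 1) (E := E)
        (E' := r - 1) hcop hd hu0 (by rw [mul_comm d (r - 1)]; omega)
      obtain rfl : j = 0 := by
        by_contra hj0
        have := Nat.le_mul_of_pos_left d (Nat.pos_of_ne_zero hj0)
        omega
      obtain rfl : u = 1 := by omega
      exact (mem_sumsOf_one.1 hE).2 (Set.mem_singleton_iff.2 (by omega))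

end Monoid

theorem mk_eq_iff_fst_eq_and_add_eq {x y : ℕ} {p : ℕ × ℕ} :
    (x, y) = p ↔ x = p.1 ∧ x + y = p.1 + p.2 := by
  constructor
  · rintro rfl
    exact ⟨rfl, rfl⟩
  · rintro ⟨h₁, h₂⟩
    exact Prod.ext h₁ (by omega)

theorem exists_cast_eq_sub_iff {σ : Type*} [Membership (ℕ × ℕ) σ] (S : σ) (x y b c : ℕ) :
    (∃ t ∈ S, ((t.1 : ℤ), (t.2 : ℤ)) = ((x : ℤ) - b, (y : ℤ) - c)) ↔
      b ≤ x ∧ c ≤ y ∧ (x - b, y - c) ∈ S := by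
  constructor
  · rintro ⟨t, ht, h⟩
    simp only [Prod.mk.injEq] at h
    obtain rfl : t = (x - b, y - c) := Prod.ext (by omega) (by omega)
    exact ⟨by omega, by omega, ht⟩
  · rintro ⟨hb, hc, h⟩
    exact ⟨_, h, by simp [hb, hc]⟩

end ArithSeq

open ArithSeq in
theorem stmt_15_general (n m₁ d : ℕ) (hn : 4 ≤ n) (hm₁ : 0 < m₁) (hd : 0 < d)
    (hgcd : Nat.gcd m₁ d = 1)
    (m : ℕ → ℕ) (hm : ∀ i, m i = m₁ + (i - 1) * d)
    (a : ℕ → ℕ × ℕ)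
    (ha : ∀ i, a i = if i = n + 1 then (0, m n) else (m i, m n - m i))
    (r : ℕ)
    (P : AddSubmonoid (ℕ × ℕ))
    (hP : P = AddSubmonoid.closure (a '' (Set.Icc 1 (n + 1) \ {r})))
    (P1 : Set (ℕ × ℕ))
    (hP1 : P1 = {s | s ∈ P ∧
      (∃ t ∈ P, ((t.1 : ℤ), (t.2 : ℤ)) =
        ((s.1 : ℤ) - ((a n).1 : ℤ), (s.2 : ℤ) - ((a n).2 : ℤ))) ∧
      (∃ t ∈ P, ((t.1 : ℤ), (t.2 : ℤ)) =
        ((s.1 : ℤ) - ((a (n + 1)).1 : ℤ), (s.2 : ℤ) - ((a (n + 1)).2 : ℤ))) ∧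
      (¬ ∃ t ∈ P, ((t.1 : ℤ), (t.2 : ℤ)) =
        ((s.1 : ℤ) - ((a n).1 : ℤ) - ((a (n + 1)).1 : ℤ),
         (s.2 : ℤ) - ((a n).2 : ℤ) - ((a (n + 1)).2 : ℤ)))}) :
    ((r = 2 ∧ m₁ = 1) →
      P1 = {x | ∃ μ : ℕ, μ < d ∧ x = μ • a 1 + a 2 + a n + d • a (n + 1)}) ∧
    ((3 ≤ r ∧ r ≤ n - 2 ∧ m₁ < r) →
      P1 = {a r + a n + d • a (n + 1)}) := by
  obtain rfl : a = gen n m₁ d := funext fun i => by rw [ha, hm, hm]; rfl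
  replace hP : P = gapMonoid n m₁ d r := hP
  subst hP hP1
  have hM : 0 < m₁ + (n - 1) * d := by omega
  have han : gen n m₁ d n = (m₁ + (n - 1) * d, 0) := by
    rw [gen_of_le (by omega) le_rfl, Nat.sub_self, zero_mul]
  have han1 : gen n m₁ d (n + 1) = (0, m₁ + (n - 1) * d) := if_pos rfl
  simp only [sub_sub, ← Nat.cast_add, exists_cast_eq_sub_iff, han, han1, add_zero, zero_add,
    zero_le, true_and, Nat.sub_zero, Set.ext_iff, Prod.forall, Set.mem_ofPred_eq,
    Set.mem_singleton_iff, mk_eq_iff_fst_eq_and_add_eq, Prod.fst_add, Prod.snd_add,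
    Prod.smul_fst, Prod.smul_snd, smul_eq_mul]
  refine ⟨fun ⟨hr, hm₁⟩ x y => ?_, fun ⟨hr, hrn, hm₁r⟩ x y => ?_⟩
  · subst hr hm₁
    rw [corner_conditions_iff_isGapCorner hM (by omega) (by omega), gen_of_le le_rfl (by omega),
      gen_of_le (by omega) (by omega)]
    refine (isGapCorner_Iio_diff_one_iff hn hd).trans
      (exists_congr fun μ => and_congr_right fun _ => ?_)
    rw [show n - 1 = n - 2 + 1 by omega]
    exact and_congr (Eq.congr_right (by ring)) (Eq.congr_right (by ring))
  · rw [corner_conditions_iff_isGapCorner hM (by omega) (by omega),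
      isGapCorner_Iio_diff_iff hgcd hm₁ hd hr hrn hm₁r, gen_of_le (by omega) (by omega),
      show n - 1 = r - 1 + (n - r) by omega]
    exact and_congr (Eq.congr_right (by ring)) (Eq.congr_right (by ring))

/-- For `r ∈ {2,…,n-1}` define
`(P_r)₁ = {s ∈ P_r : s - a_n ∈ P_r, s - a_{n+1} ∈ P_r, s - a_n - a_{n+1} ∉ P_r}`.
Then: if `r = 2` and `m_1 = 1`,
`(P_2)₁ = {μ·a_1 + a_2 + a_n + d·a_{n+1} : 0 ≤ μ ≤ d-1}` (written `μ < d`); and if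
`3 ≤ r ≤ n-2` and `m_1 < r`, `(P_r)₁ = {a_r + a_n + d·a_{n+1}}`. -/
theorem stmt_15 (n m₁ d : ℕ) (hn : 4 ≤ n) (hm₁ : 0 < m₁) (hd : 0 < d)
    (hgcd : Nat.gcd m₁ d = 1)
    (m : ℕ → ℕ) (hm : ∀ i, m i = m₁ + (i - 1) * d)
    (a : ℕ → ℕ × ℕ)
    (ha : ∀ i, a i = if i = n + 1 then (0, m n) else (m i, m n - m i))
    (r : ℕ) (hr₁ : 2 ≤ r) (hr₂ : r ≤ n - 1)
    (P : AddSubmonoid (ℕ × ℕ))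
    (hP : P = AddSubmonoid.closure (a '' (Set.Icc 1 (n + 1) \ {r})))
    (P1 : Set (ℕ × ℕ))
    (hP1 : P1 = {s | s ∈ P ∧
      (∃ t ∈ P, ((t.1 : ℤ), (t.2 : ℤ)) =
        ((s.1 : ℤ) - ((a n).1 : ℤ), (s.2 : ℤ) - ((a n).2 : ℤ))) ∧
      (∃ t ∈ P, ((t.1 : ℤ), (t.2 : ℤ)) =
        ((s.1 : ℤ) - ((a (n + 1)).1 : ℤ), (s.2 : ℤ) - ((a (n + 1)).2 : ℤ))) ∧
      (¬ ∃ t ∈ P, ((t.1 : ℤ), (t.2 : ℤ)) =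
        ((s.1 : ℤ) - ((a n).1 : ℤ) - ((a (n + 1)).1 : ℤ),
         (s.2 : ℤ) - ((a n).2 : ℤ) - ((a (n + 1)).2 : ℤ)))}) :
    ((r = 2 ∧ m₁ = 1) →
      P1 = {x | ∃ μ : ℕ, μ < d ∧ x = μ • a 1 + a 2 + a n + d • a (n + 1)}) ∧
    ((3 ≤ r ∧ r ≤ n - 2 ∧ m₁ < r) →
      P1 = {a r + a n + d • a (n + 1)}) :=
  stmt_15_general n m₁ d hn hm₁ hd hgcd m hm a ha r P hP P1 hP1
end
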